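/- For real numbers a, b, c, d ≥ 0, the convex hull in ℝ⁴ of (Δ₃(a,b,c)×{d}) ∪ (Δ₃(a,b+d,c)×{0}) (fourth coordinate u₄) equals Δ₄(a,b,c,d) := {(u₁,u₂,u₃,u₄) ∈ ℝ⁴ : u₁, u₂, u₃, u₄ ≥ 0, u₃ ≤ c, u₄ ≤ d, u₁+u₄ ≤ a+b+d, u₂+u₃+u₄ ≤ b+c+d, u₁+u₂+u₃+u₄ ≤ a+b+c+d}. -/

import Mathlib

/-- The polytope `Δ₃(a,b,c) ⊂ ℝ³`. -/
def Delta3 (a b c : ℝ) : Set (Fin 3 → ℝ) :=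
  {u | 0 ≤ u 0 ∧ 0 ≤ u 1 ∧ 0 ≤ u 2 ∧ u 0 ≤ a + b ∧ u 2 ≤ c ∧ u 1 + u 2 ≤ b + c ∧
    u 0 + u 1 + u 2 ≤ a + b + c}

/-!
`Δ₄(a,b,c,d)` is cut out by linear inequalities, so it is convex, and it contains both faces.
Conversely, the slice of `Δ₄` at height `t ∈ [0, d]` is `Δ₃(a, b + (d - t), c)`, and
`Δ₃(a, b + s, c) = Δ₃(a, b, c) + s • conv {0, e₀, e₁}`. Writing `d - t = θ d`, a point `x + w` of
the slice is `(1 - θ) (x, d) + θ (x + θ⁻¹ w, 0)`, a convex combination of points of the two faces.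
-/

open Set Pointwise

/-- The push-pull polytope `Δ(P, Q)`. -/
def pushPull {E : Type*} [AddCommGroup E] [Module ℝ E] (P Q : Set E) (h : ℝ) : Set (E × ℝ) :=
  convexHull ℝ (P ×ˢ {h} ∪ Q ×ˢ {0})

lemma combo_mem_pushPull {E : Type*} [AddCommGroup E] [Module ℝ E] {P Q : Set E} {h θ : ℝ}
    {x y : E} (hx : x ∈ P) (hy : y ∈ Q) (hθ₀ : 0 ≤ θ) (hθ₁ : θ ≤ 1) :
    ((1 - θ) • x + θ • y, (1 - θ) * h) ∈ pushPull P Q h := by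
  have hxy : (1 - θ) • (x, h) + θ • (y, (0 : ℝ)) ∈ pushPull P Q h := by
    refine convex_convexHull ℝ _ ?_ ?_ (sub_nonneg.2 hθ₁) hθ₀ (sub_add_cancel 1 θ) <;>
      apply subset_convexHull
    exacts [Or.inl ⟨hx, rfl⟩, Or.inr ⟨hy, rfl⟩]
  simpa using hxy

/-- The triangle `s • conv {0, e₀, e₁}`. -/
def cornerTriangle (s : ℝ) : Set (Fin 3 → ℝ) :=
  {w | 0 ≤ w 0 ∧ 0 ≤ w 1 ∧ w 2 = 0 ∧ w 0 + w 1 ≤ s}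

lemma smul_mem_cornerTriangle {r s : ℝ} {w : Fin 3 → ℝ} (hr : 0 ≤ r)
    (hw : w ∈ cornerTriangle s) : r • w ∈ cornerTriangle (r * s) := by
  obtain ⟨h0, h1, h2, h01⟩ := hw
  refine ⟨mul_nonneg hr h0, mul_nonneg hr h1, ?_, ?_⟩ <;>
    simp only [Pi.smul_apply, smul_eq_mul]
  · rw [h2, mul_zero]
  · rw [← mul_add]
    exact mul_le_mul_of_nonneg_left h01 hr

lemma Delta3_add_right_eq {a b s : ℝ} (c : ℝ) (ha : 0 ≤ a) (hb : 0 ≤ b) (hs : 0 ≤ s) :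
    Delta3 a (b + s) c = Delta3 a b c + cornerTriangle s := by
  ext u
  rw [mem_add]
  constructor
  · rintro ⟨h0, h1, h2, h3, h4, h5, h6⟩
    -- Lower `u₁` by the excess of `u₁ + u₂` over `b + c`, then `u₀` by what still exceeds.
    set w₁ := max (u 1 + u 2 - (b + c)) 0
    set w₀ := max (u 0 - (a + b)) (max (u 0 + u 1 + u 2 - (a + b + c) - w₁) 0)
    refine ⟨u - ![w₀, w₁, 0], ?_, ![w₀, w₁, 0],
      ⟨le_max_of_le_right (le_max_right _ _), le_max_right _ _, rfl, ?_⟩, sub_add_cancel u _⟩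
    all_goals
      simp only [Delta3, mem_ofPred_eq, Pi.sub_apply, Matrix.cons_val_zero,
        Matrix.cons_val_one, Matrix.cons_val_two, Matrix.head_cons, Matrix.tail_cons]
      rcases max_cases (u 1 + u 2 - (b + c)) 0 with ⟨e1, f1⟩ | ⟨e1, f1⟩ <;>
      rcases max_cases (u 0 + u 1 + u 2 - (a + b + c) - w₁) 0 with ⟨e2, f2⟩ | ⟨e2, f2⟩ <;>
      rcases max_cases (u 0 - (a + b)) (max (u 0 + u 1 + u 2 - (a + b + c) - w₁) 0) with
        ⟨e0, f0⟩ | ⟨e0, f0⟩ <;>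
      and_intros <;> linarith
  · rintro ⟨x, ⟨h0, h1, h2, h3, h4, h5, h6⟩, w, ⟨w0, w1, w2, w01⟩, rfl⟩
    simp only [Delta3, mem_ofPred_eq, Pi.add_apply, w2]
    and_intros <;> linarith

lemma exists_combo_eq_of_mem_Delta3 {a b d θ : ℝ} (c : ℝ) (ha : 0 ≤ a) (hb : 0 ≤ b) (hd : 0 ≤ d)
    (hθ : 0 < θ) {u : Fin 3 → ℝ} (hu : u ∈ Delta3 a (b + θ * d) c) :
    ∃ x ∈ Delta3 a b c, ∃ y ∈ Delta3 a (b + d) c, (1 - θ) • x + θ • y = u := by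
  rw [Delta3_add_right_eq c ha hb (mul_nonneg hθ.le hd)] at hu
  obtain ⟨x, hx, w, hw, rfl⟩ := hu
  refine ⟨x, hx, x + θ⁻¹ • w, ?_, ?_⟩
  · rw [Delta3_add_right_eq c ha hb hd]
    refine add_mem_add hx ?_
    simpa [inv_mul_cancel_left₀ hθ.ne'] using smul_mem_cornerTriangle (inv_nonneg.2 hθ.le) hw
  · rw [smul_add, smul_inv_smul₀ hθ.ne', ← add_assoc, ← add_smul, sub_add_cancel, one_smul]

lemma mk_mem_pushPull_Delta3_of_lt {a b d t : ℝ} {u : Fin 3 → ℝ} (c : ℝ) (ha : 0 ≤ a)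
    (hb : 0 ≤ b) (ht : 0 ≤ t) (htd : t < d) (hu : u ∈ Delta3 a (b + (d - t)) c) :
    (u, t) ∈ pushPull (Delta3 a b c) (Delta3 a (b + d) c) d := by
  have hd : 0 < d := ht.trans_lt htd
  obtain ⟨θ, hθ₀, hθ₁, hθd⟩ : ∃ θ : ℝ, 0 < θ ∧ θ ≤ 1 ∧ θ * d = d - t :=
    ⟨(d - t) / d, div_pos (sub_pos.2 htd) hd, (div_le_one hd).2 (sub_le_self d ht),
      div_mul_cancel₀ _ hd.ne'⟩
  rw [← hθd] at hu
  obtain ⟨x, hx, y, hy, rfl⟩ := exists_combo_eq_of_mem_Delta3 c ha hb hd.le hθ₀ hu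
  rw [show t = (1 - θ) * d by linear_combination hθd]
  exact combo_mem_pushPull hx hy hθ₀.le hθ₁

def Delta4 (a b c d : ℝ) : Set ((Fin 3 → ℝ) × ℝ) :=
  {p | 0 ≤ p.1 0 ∧ 0 ≤ p.1 1 ∧ 0 ≤ p.1 2 ∧ 0 ≤ p.2 ∧
    p.1 2 ≤ c ∧ p.2 ≤ d ∧ p.1 0 + p.2 ≤ a + b + d ∧
    p.1 1 + p.1 2 + p.2 ≤ b + c + d ∧
    p.1 0 + p.1 1 + p.1 2 + p.2 ≤ a + b + c + d}

lemma convex_Delta4 (a b c d : ℝ) : Convex ℝ (Delta4 a b c d) := by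
  simp only [Delta4, ofPred_and]
  repeat' apply Convex.inter
  all_goals first
    | apply convex_halfSpace_ge | apply convex_halfSpace_le
  all_goals exact ⟨fun p q => by simp only [Prod.fst_add, Prod.snd_add, Pi.add_apply] <;> ring,
    fun r p => by simp only [Prod.smul_fst, Prod.smul_snd, Pi.smul_apply, smul_eq_mul] <;> ring⟩

lemma mk_mem_Delta4_iff {a b c d t : ℝ} {u : Fin 3 → ℝ} :
    (u, t) ∈ Delta4 a b c d ↔ 0 ≤ t ∧ t ≤ d ∧ u ∈ Delta3 a (b + (d - t)) c := by
  simp only [Delta4, Delta3, mem_ofPred_eq]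
  constructor
  · rintro ⟨h0, h1, h2, h3, h4, h5, h6, h7, h8⟩
    exact ⟨h3, h5, h0, h1, h2, by linarith, h4, by linarith, by linarith⟩
  · rintro ⟨h3, h5, h0, h1, h2, h6, h4, h7, h8⟩
    exact ⟨h0, h1, h2, h3, h4, h5, by linarith, by linarith, by linarith⟩

theorem pushPull_Delta3_eq_Delta4_general (a b c d : ℝ)
    (ha : 0 ≤ a) (hb : 0 ≤ b) (hd : 0 ≤ d) :
    convexHull ℝ
        ((Delta3 a b c ×ˢ ({d} : Set ℝ)) ∪ (Delta3 a (b + d) c ×ˢ ({0} : Set ℝ))) =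
      {p : (Fin 3 → ℝ) × ℝ | 0 ≤ p.1 0 ∧ 0 ≤ p.1 1 ∧ 0 ≤ p.1 2 ∧ 0 ≤ p.2 ∧
        p.1 2 ≤ c ∧ p.2 ≤ d ∧ p.1 0 + p.2 ≤ a + b + d ∧
        p.1 1 + p.1 2 + p.2 ≤ b + c + d ∧
        p.1 0 + p.1 1 + p.1 2 + p.2 ≤ a + b + c + d} := by
  change pushPull (Delta3 a b c) (Delta3 a (b + d) c) d = Delta4 a b c d
  refine (convexHull_min ?_ (convex_Delta4 a b c d)).antisymm ?_
  · rintro ⟨u, t⟩ (⟨hu, rfl⟩ | ⟨hu, rfl⟩) <;> rw [mk_mem_Delta4_iff]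
    · exact ⟨hd, le_rfl, by rwa [sub_self, add_zero]⟩
    · exact ⟨le_rfl, hd, by rwa [sub_zero]⟩
  rintro ⟨u, t⟩ hut
  obtain ⟨ht, htd, hu⟩ := mk_mem_Delta4_iff.1 hut
  rcases htd.eq_or_lt with rfl | htd
  · rw [sub_self, add_zero] at hu
    exact subset_convexHull ℝ _ (Or.inl ⟨hu, rfl⟩)
  · exact mk_mem_pushPull_Delta3_of_lt c ha hb ht htd hu

/-- The push-pull polytope `conv((Δ₃(a,b,c) × {d}) ∪ (Δ₃(a,b+d,c) × {0}))` equals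
`Δ₄(a,b,c,d)` (fourth coordinate `u₄` is the height). -/
theorem pushPull_Delta3_eq_Delta4 (a b c d : ℝ)
    (ha : 0 ≤ a) (hb : 0 ≤ b) (hc : 0 ≤ c) (hd : 0 ≤ d) :
    convexHull ℝ
        ((Delta3 a b c ×ˢ ({d} : Set ℝ)) ∪ (Delta3 a (b + d) c ×ˢ ({0} : Set ℝ))) =
      {p : (Fin 3 → ℝ) × ℝ | 0 ≤ p.1 0 ∧ 0 ≤ p.1 1 ∧ 0 ≤ p.1 2 ∧ 0 ≤ p.2 ∧
        p.1 2 ≤ c ∧ p.2 ≤ d ∧ p.1 0 + p.2 ≤ a + b + d ∧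
        p.1 1 + p.1 2 + p.2 ≤ b + c + d ∧
        p.1 0 + p.1 1 + p.1 2 + p.2 ≤ a + b + c + d} :=
  pushPull_Delta3_eq_Delta4_general a b c d ha hb hd
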